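/- arXiv:1309.6241 — 9 statements merged into one kernel-verified Lean document; each statement's English description precedes it below -/
import Mathlib

section
/- Let i,j,k,l ∈ {1,…,n} be pairwise distinct (so n ≥ 4). Then tr(e_{kl} · g(e_{ij})) = 0 and tr(e_{kl} · g(e_{ii} − e_{jj})) = 0. -/
/-!
Comparing the traces of `x ⋆ (y ⋆ z)` and `(x ⋆ y) ⋆ z` and using `tr(a ⋆ b) = tr(a b)` on
the outer product gives `tr(x g([y, z])) = tr(g([x, y]) z)`. When `x` commutes with `y` the
right-hand side vanishes; taking `x = e_{kl}`, `y = e_{ij}` and `z = e_{jj}` resp. `z = e_{ji}`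
turns the commutator `[y, z]` into `e_{ij}` resp. `e_{ii} − e_{jj}`.
-/

open Matrix

namespace Matrix

variable {m R : Type*} [Fintype m] [NonUnitalRing R]

theorem trace_mul_apply_commutator_eq_trace_apply_commutator_mul
    (g : Matrix m m R → Matrix m m R) (star : Matrix m m R → Matrix m m R → Matrix m m R)
    (hstar : ∀ x y, star x y = x * y + g (x * y - y * x))
    (hA : ∀ x y z, star x (star y z) = star (star x y) z)
    (hT : ∀ x y, (star x y).trace = (x * y).trace) (x y z : Matrix m m R) :
    (x * g (y * z - z * y)).trace = (g (x * y - y * x) * z).trace := by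
  have h := congrArg trace (hA x y z)
  rw [hT, hT, hstar y z, hstar x y, mul_add, add_mul, trace_add, trace_add, ← Matrix.mul_assoc]
    at h
  exact add_left_cancel h

theorem trace_mul_apply_commutator_eq_zero_of_commute
    (g : Matrix m m R →+ Matrix m m R) (star : Matrix m m R → Matrix m m R → Matrix m m R)
    (hstar : ∀ x y, star x y = x * y + g (x * y - y * x))
    (hA : ∀ x y z, star x (star y z) = star (star x y) z)
    (hT : ∀ x y, (star x y).trace = (x * y).trace) {x y : Matrix m m R} (hxy : Commute x y)
    (z : Matrix m m R) :
    (x * g (y * z - z * y)).trace = 0 := by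
  rw [trace_mul_apply_commutator_eq_trace_apply_commutator_mul g star hstar hA hT,
    sub_eq_zero.mpr hxy.eq, map_zero, Matrix.zero_mul, trace_zero]

end Matrix

theorem stmt_4_general {F : Type*} [Field F] {n : ℕ}
    (g : Matrix (Fin n) (Fin n) F →ₗ[F] Matrix (Fin n) (Fin n) F)
    (star : Matrix (Fin n) (Fin n) F → Matrix (Fin n) (Fin n) F → Matrix (Fin n) (Fin n) F)
    (hstar : ∀ x y : Matrix (Fin n) (Fin n) F, star x y = x * y + g (x * y - y * x))
    (hA : ∀ x y z : Matrix (Fin n) (Fin n) F, star x (star y z) = star (star x y) z)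
    (hT : ∀ x y : Matrix (Fin n) (Fin n) F, (star x y).trace = (x * y).trace)
    (i j k l : Fin n) (hij : i ≠ j) (hil : i ≠ l)
    (hjk : j ≠ k) :
    (Matrix.single k l (1 : F) * g (Matrix.single i j (1 : F))).trace = 0 ∧
    (Matrix.single k l (1 : F) * g (Matrix.single i i (1 : F) - Matrix.single j j (1 : F))).trace = 0 := by
  have hcomm : Commute (single k l (1 : F)) (single i j 1) := by
    rw [Commute, SemiconjBy, single_mul_single_of_ne (h := hil.symm),
      single_mul_single_of_ne (h := hjk)]
  have key :=
    trace_mul_apply_commutator_eq_zero_of_commute g.toAddMonoidHom star hstar hA hT hcomm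
  have hdiag : single i j (1 : F) * single j j 1 - single j j 1 * single i j 1 = single i j 1 := by
    rw [single_mul_single_same, single_mul_single_of_ne (h := hij.symm), mul_one, sub_zero]
  have hswap : single i j (1 : F) * single j i 1 - single j i 1 * single i j 1 =
      single i i 1 - single j j 1 := by
    rw [single_mul_single_same, single_mul_single_same, mul_one]
  exact ⟨hdiag ▸ key (single j j 1), hswap ▸ key (single j i 1)⟩

/-- Lemma 3, equations (3)–(4): for pairwise distinct indices `i, j, k, l`,
`tr(e_{kl} g(e_{ij})) = 0` and `tr(e_{kl} g(e_{ii} − e_{jj})) = 0`. -/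
theorem stmt_4 {F : Type*} [Field F] (h2 : (2 : F) ≠ 0) {n : ℕ}
    (g : Matrix (Fin n) (Fin n) F →ₗ[F] Matrix (Fin n) (Fin n) F)
    (star : Matrix (Fin n) (Fin n) F → Matrix (Fin n) (Fin n) F → Matrix (Fin n) (Fin n) F)
    (hstar : ∀ x y : Matrix (Fin n) (Fin n) F, star x y = x * y + g (x * y - y * x))
    (hA : ∀ x y z : Matrix (Fin n) (Fin n) F, star x (star y z) = star (star x y) z)
    (hT : ∀ x y : Matrix (Fin n) (Fin n) F, (star x y).trace = (x * y).trace)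
    (i j k l : Fin n) (hij : i ≠ j) (hik : i ≠ k) (hil : i ≠ l)
    (hjk : j ≠ k) (hjl : j ≠ l) (hkl : k ≠ l) :
    (Matrix.single k l (1 : F) * g (Matrix.single i j (1 : F))).trace = 0 ∧
    (Matrix.single k l (1 : F) * g (Matrix.single i i (1 : F) - Matrix.single j j (1 : F))).trace = 0 :=
  stmt_4_general g star hstar hA hT i j k l hij hil hjk
end

section
/- Let i,j,k ∈ {1,…,n} be pairwise distinct (so n ≥ 3). Then tr(e_{jk} · g(e_{ij})) = 0, tr(e_{kj} · g(e_{ij})) = 0, tr(e_{ik} · g(e_{ij})) = 0, tr(e_{ki} · g(e_{ij})) = 0, and tr(e_{kk} · g(e_{ij})) = 0. -/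
/-!
Evaluating `tr(x ⋆ (y ⋆ z)) = tr((x ⋆ y) ⋆ z)` with `tr(a ⋆ b) = tr(ab)` cancels the `xyz` terms
and leaves `tr(x g⁅y, z⁆) = tr(g⁅x, y⁆ z)`. Hence `tr(x g⁅y, z⁆) = 0` whenever `x` commutes with
`y`; since `e_ij = ⁅e_ii, e_ij⁆ = ⁅e_ij, e_jj⁆`, this kills the pairings of `g(e_ij)` with every
matrix unit commuting with `e_ii` or with `e_ij`. The remaining one, `e_ki`, is moved across by the
same identity: `tr(e_ki g(e_ij)) = tr(g(e_ki) e_ij)`, which vanishes by the first case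
applied to the indices `k, i, j`.
-/

open Matrix

section Commutators

variable {R m : Type*} [Ring R] [Fintype m] [DecidableEq m]

theorem Matrix.commute_single_single_of_ne {a b a' b' : m} (hba' : b ≠ a') (hb'a : b' ≠ a)
    {c c' : R} : Commute (single a b c) (single a' b' c') := by
  rw [Commute, SemiconjBy, single_mul_single_of_ne (h := hba'),
    single_mul_single_of_ne (h := hb'a)]

theorem Matrix.lie_single_diag_single {a b : m} (hab : a ≠ b) :
    ⁅single a a (1 : R), single a b (1 : R)⁆ = single a b 1 := by
  rw [Ring.lie_def, single_mul_single_same, single_mul_single_of_ne (h := hab.symm), one_mul,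
    sub_zero]

theorem Matrix.lie_single_single_diag {a b : m} (hab : a ≠ b) :
    ⁅single a b (1 : R), single b b (1 : R)⁆ = single a b 1 := by
  rw [Ring.lie_def, single_mul_single_same, single_mul_single_of_ne (h := hab.symm), mul_one,
    sub_zero]

end Commutators

section DeformedProduct

variable {R m : Type*} [Ring R] [Fintype m] [DecidableEq m]
  {g : Matrix m m R →ₗ[R] Matrix m m R} {star : Matrix m m R → Matrix m m R → Matrix m m R}

theorem trace_mul_map_lie_eq_trace_map_lie_mul (hstar : ∀ x y, star x y = x * y + g ⁅x, y⁆)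
    (hA : ∀ x y z, star x (star y z) = star (star x y) z)
    (hT : ∀ x y, (star x y).trace = (x * y).trace) (x y z : Matrix m m R) :
    (x * g ⁅y, z⁆).trace = (g ⁅x, y⁆ * z).trace := by
  have h := hT x (star y z)
  rw [hA, hT (star x y) z, hstar y z, hstar x y, mul_add, add_mul, trace_add, trace_add,
    ← mul_assoc] at h
  exact (add_left_cancel h).symm

theorem trace_mul_map_lie_eq_zero_of_commute (hstar : ∀ x y, star x y = x * y + g ⁅x, y⁆)
    (hA : ∀ x y z, star x (star y z) = star (star x y) z)
    (hT : ∀ x y, (star x y).trace = (x * y).trace) {x y : Matrix m m R} (hxy : Commute x y)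
    (z : Matrix m m R) : (x * g ⁅y, z⁆).trace = 0 := by
  rw [trace_mul_map_lie_eq_trace_map_lie_mul hstar hA hT, Ring.lie_def, hxy.eq, sub_self,
    map_zero, zero_mul, trace_zero]

theorem trace_single_mul_map_single_eq_zero (hstar : ∀ x y, star x y = x * y + g ⁅x, y⁆)
    (hA : ∀ x y z, star x (star y z) = star (star x y) z)
    (hT : ∀ x y, (star x y).trace = (x * y).trace) {i j k : m} (hij : i ≠ j) (hik : i ≠ k) :
    (single j k (1 : R) * g (single i j 1)).trace = 0 := by
  rw [← lie_single_diag_single hij]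
  exact trace_mul_map_lie_eq_zero_of_commute hstar hA hT
    (commute_single_single_of_ne hik.symm hij) _

end DeformedProduct

theorem stmt_5_general {F : Type*} [Field F] {n : ℕ}
    (g : Matrix (Fin n) (Fin n) F →ₗ[F] Matrix (Fin n) (Fin n) F)
    (star : Matrix (Fin n) (Fin n) F → Matrix (Fin n) (Fin n) F → Matrix (Fin n) (Fin n) F)
    (hstar : ∀ x y : Matrix (Fin n) (Fin n) F, star x y = x * y + g (x * y - y * x))
    (hA : ∀ x y z : Matrix (Fin n) (Fin n) F, star x (star y z) = star (star x y) z)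
    (hT : ∀ x y : Matrix (Fin n) (Fin n) F, (star x y).trace = (x * y).trace)
    (i j k : Fin n) (hij : i ≠ j) (hik : i ≠ k) (hjk : j ≠ k) :
    (Matrix.single j k (1 : F) * g (Matrix.single i j (1 : F))).trace = 0 ∧
    (Matrix.single k j (1 : F) * g (Matrix.single i j (1 : F))).trace = 0 ∧
    (Matrix.single i k (1 : F) * g (Matrix.single i j (1 : F))).trace = 0 ∧
    (Matrix.single k i (1 : F) * g (Matrix.single i j (1 : F))).trace = 0 ∧
    (Matrix.single k k (1 : F) * g (Matrix.single i j (1 : F))).trace = 0 := by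
  simp_rw [← Ring.lie_def] at hstar
  have hkill {x y : Matrix (Fin n) (Fin n) F} (hxy : Commute x y) (z) :=
    trace_mul_map_lie_eq_zero_of_commute hstar hA hT hxy z
  refine ⟨trace_single_mul_map_single_eq_zero hstar hA hT hij hik, ?_, ?_, ?_, ?_⟩
  · rw [← lie_single_diag_single hij]
    exact hkill (commute_single_single_of_ne hij.symm hik) _
  · rw [← lie_single_single_diag hij]
    exact hkill (commute_single_single_of_ne hik.symm hij.symm) _
  · rw [← lie_single_diag_single hij, trace_mul_map_lie_eq_trace_map_lie_mul hstar hA hT,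
      lie_single_single_diag hik.symm, trace_mul_comm]
    exact trace_single_mul_map_single_eq_zero hstar hA hT hik.symm hjk.symm
  · rw [← lie_single_diag_single hij]
    exact hkill (commute_single_single_of_ne hik.symm hik) _

/-- Lemma 3, equations (5)–(9): for pairwise distinct indices `i, j, k`,
`tr(e_{jk} g(e_{ij})) = tr(e_{kj} g(e_{ij})) = tr(e_{ik} g(e_{ij})) = tr(e_{ki} g(e_{ij})) = tr(e_{kk} g(e_{ij})) = 0`. -/
theorem stmt_5 {F : Type*} [Field F] (h2 : (2 : F) ≠ 0) {n : ℕ}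
    (g : Matrix (Fin n) (Fin n) F →ₗ[F] Matrix (Fin n) (Fin n) F)
    (star : Matrix (Fin n) (Fin n) F → Matrix (Fin n) (Fin n) F → Matrix (Fin n) (Fin n) F)
    (hstar : ∀ x y : Matrix (Fin n) (Fin n) F, star x y = x * y + g (x * y - y * x))
    (hA : ∀ x y z : Matrix (Fin n) (Fin n) F, star x (star y z) = star (star x y) z)
    (hT : ∀ x y : Matrix (Fin n) (Fin n) F, (star x y).trace = (x * y).trace)
    (i j k : Fin n) (hij : i ≠ j) (hik : i ≠ k) (hjk : j ≠ k) :
    (Matrix.single j k (1 : F) * g (Matrix.single i j (1 : F))).trace = 0 ∧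
    (Matrix.single k j (1 : F) * g (Matrix.single i j (1 : F))).trace = 0 ∧
    (Matrix.single i k (1 : F) * g (Matrix.single i j (1 : F))).trace = 0 ∧
    (Matrix.single k i (1 : F) * g (Matrix.single i j (1 : F))).trace = 0 ∧
    (Matrix.single k k (1 : F) * g (Matrix.single i j (1 : F))).trace = 0 :=
  stmt_5_general g star hstar hA hT i j k hij hik hjk
end

section
/- Let i,j,k ∈ {1,…,n} be pairwise distinct (so n ≥ 3). Then tr(e_{kk} · g(e_{ii} − e_{jj})) = 0, tr(e_{ik} · g(e_{ii} − e_{jj})) = 0, tr(e_{ki} · g(e_{ii} − e_{jj})) = 0, tr(e_{kj} · g(e_{ii} − e_{jj})) = 0, and tr(e_{jk} · g(e_{ii} − e_{jj})) = 0. -/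
/-!
Taking traces in the associativity law of `⋆`, and using that `tr ∘ g` kills commutators,
yields the cyclic identity `tr(x g[y,z]) = tr(z g[x,y])`. Since `e_ii − e_jj = [e_ij, e_ji]`,
each of the five traces is `tr(x g[y,z])` for matrix units with `x` commuting with `y` or with `z`,
and the cyclic identity turns it into a trace against `g 0 = 0`.
-/

namespace Matrix

variable {n R : Type*} [Fintype n]

theorem commute_single_single_of_ne_s6 [DecidableEq n] [Semiring R] {a b c d : n} (hbc : b ≠ c)
    (hda : d ≠ a) (r s : R) : Commute (single a b r) (single c d s) :=
  (single_mul_single_of_ne (h := hbc) ..).trans (single_mul_single_of_ne (h := hda) ..).symm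

theorem single_one_commutator_single_one [DecidableEq n] [Ring R] (i j : n) :
    single i j (1 : R) * single j i 1 - single j i 1 * single i j 1 =
      single i i 1 - single j j 1 := by
  simp only [single_mul_single_same, mul_one]

section DeformedProduct

variable [CommRing R] (g : Matrix n n R → Matrix n n R)
  (star : Matrix n n R → Matrix n n R → Matrix n n R)
  (hstar : ∀ x y, star x y = x * y + g (x * y - y * x))
  (hT : ∀ x y, (star x y).trace = (x * y).trace)
include hstar hT

theorem trace_map_commutator_eq_zero (x y : Matrix n n R) : (g (x * y - y * x)).trace = 0 := by
  have h := hT x y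
  rw [hstar, trace_add] at h
  linear_combination h

variable (hA : ∀ x y z, star x (star y z) = star (star x y) z)
include hA

theorem trace_mul_map_commutator_cyclic (x y z : Matrix n n R) :
    (x * g (y * z - z * y)).trace = (z * g (x * y - y * x)).trace := by
  have hg := trace_map_commutator_eq_zero g star hstar hT
  have h := congrArg trace (hA x y z)
  rw [hstar x, hstar (star x y) z, trace_add, trace_add, hg, hg, hstar y, hstar x y] at h
  simp only [mul_add, add_mul, trace_add] at h
  rw [trace_mul_comm (g _) z, ← mul_assoc] at h
  linear_combination h

theorem trace_mul_map_commutator_eq_zero_of_commute_left (hg : g 0 = 0) {x y : Matrix n n R}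
    (hxy : Commute x y) (z : Matrix n n R) : (x * g (y * z - z * y)).trace = 0 := by
  rw [trace_mul_map_commutator_cyclic g star hstar hT hA, hxy.eq, sub_self, hg, mul_zero,
    trace_zero]

theorem trace_mul_map_commutator_eq_zero_of_commute_right (hg : g 0 = 0) {x z : Matrix n n R}
    (hxz : Commute x z) (y : Matrix n n R) : (x * g (y * z - z * y)).trace = 0 := by
  rw [trace_mul_map_commutator_cyclic g star hstar hT hA,
    trace_mul_map_commutator_cyclic g star hstar hT hA, ← hxz.eq, sub_self, hg, mul_zero,
    trace_zero]

end DeformedProduct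

end Matrix

theorem stmt_6_general {F : Type*} [Field F] {n : ℕ}
    (g : Matrix (Fin n) (Fin n) F →ₗ[F] Matrix (Fin n) (Fin n) F)
    (star : Matrix (Fin n) (Fin n) F → Matrix (Fin n) (Fin n) F → Matrix (Fin n) (Fin n) F)
    (hstar : ∀ x y : Matrix (Fin n) (Fin n) F, star x y = x * y + g (x * y - y * x))
    (hA : ∀ x y z : Matrix (Fin n) (Fin n) F, star x (star y z) = star (star x y) z)
    (hT : ∀ x y : Matrix (Fin n) (Fin n) F, (star x y).trace = (x * y).trace)
    (i j k : Fin n) (hij : i ≠ j) (hik : i ≠ k) (hjk : j ≠ k) :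
    (Matrix.single k k (1 : F) * g (Matrix.single i i (1 : F) - Matrix.single j j (1 : F))).trace = 0 ∧
    (Matrix.single i k (1 : F) * g (Matrix.single i i (1 : F) - Matrix.single j j (1 : F))).trace = 0 ∧
    (Matrix.single k i (1 : F) * g (Matrix.single i i (1 : F) - Matrix.single j j (1 : F))).trace = 0 ∧
    (Matrix.single k j (1 : F) * g (Matrix.single i i (1 : F) - Matrix.single j j (1 : F))).trace = 0 ∧
    (Matrix.single j k (1 : F) * g (Matrix.single i i (1 : F) - Matrix.single j j (1 : F))).trace = 0 := by
  rw [← Matrix.single_one_commutator_single_one i j]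
  have left := @Matrix.trace_mul_map_commutator_eq_zero_of_commute_left _ _ _ _
    g star hstar hT hA (map_zero g)
  have right := @Matrix.trace_mul_map_commutator_eq_zero_of_commute_right _ _ _ _
    g star hstar hT hA (map_zero g)
  exact ⟨left (Matrix.commute_single_single_of_ne_s6 hik.symm hjk _ _) _,
    left (Matrix.commute_single_single_of_ne_s6 hik.symm hij.symm _ _) _,
    right (Matrix.commute_single_single_of_ne_s6 hij hik _ _) _,
    left (Matrix.commute_single_single_of_ne_s6 hij.symm hjk _ _) _,
    right (Matrix.commute_single_single_of_ne_s6 hjk.symm hij _ _) _⟩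

/-- Lemma 3, equations (10)–(14): for pairwise distinct indices `i, j, k`,
`tr(e_{kk} g(e_{ii}−e_{jj})) = tr(e_{ik} g(e_{ii}−e_{jj})) = tr(e_{ki} g(e_{ii}−e_{jj})) = tr(e_{kj} g(e_{ii}−e_{jj})) = tr(e_{jk} g(e_{ii}−e_{jj})) = 0`. -/
theorem stmt_6 {F : Type*} [Field F] (h2 : (2 : F) ≠ 0) {n : ℕ}
    (g : Matrix (Fin n) (Fin n) F →ₗ[F] Matrix (Fin n) (Fin n) F)
    (star : Matrix (Fin n) (Fin n) F → Matrix (Fin n) (Fin n) F → Matrix (Fin n) (Fin n) F)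
    (hstar : ∀ x y : Matrix (Fin n) (Fin n) F, star x y = x * y + g (x * y - y * x))
    (hA : ∀ x y z : Matrix (Fin n) (Fin n) F, star x (star y z) = star (star x y) z)
    (hT : ∀ x y : Matrix (Fin n) (Fin n) F, (star x y).trace = (x * y).trace)
    (i j k : Fin n) (hij : i ≠ j) (hik : i ≠ k) (hjk : j ≠ k) :
    (Matrix.single k k (1 : F) * g (Matrix.single i i (1 : F) - Matrix.single j j (1 : F))).trace = 0 ∧
    (Matrix.single i k (1 : F) * g (Matrix.single i i (1 : F) - Matrix.single j j (1 : F))).trace = 0 ∧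
    (Matrix.single k i (1 : F) * g (Matrix.single i i (1 : F) - Matrix.single j j (1 : F))).trace = 0 ∧
    (Matrix.single k j (1 : F) * g (Matrix.single i i (1 : F) - Matrix.single j j (1 : F))).trace = 0 ∧
    (Matrix.single j k (1 : F) * g (Matrix.single i i (1 : F) - Matrix.single j j (1 : F))).trace = 0 :=
  stmt_6_general g star hstar hA hT i j k hij hik hjk
end

section
/- Let i,j ∈ {1,…,n} be distinct (so n ≥ 2). Then tr(e_{jj} · g(e_{ij})) = 0, tr(e_{ii} · g(e_{ij})) = 0, tr(e_{ij} · g(e_{ij})) = 0, tr(e_{ij} · g(e_{ii} − e_{jj})) = 0, and tr(e_{ji} · g(e_{ii} − e_{jj})) = 0. -/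
/-!
Associativity of `⋆` together with `tr(x ⋆ y) = tr(xy)` gives, by expanding
`tr(x ⋆ (y ⋆ z)) = tr((x ⋆ y) ⋆ z)`, the cyclic identity
`tr(x g([y, z])) = tr(z g([x, y]))`. Evaluating it at suitable triples of matrix units makes each
trace either equal to its own negative (hence zero, as `2 ≠ 0`), equal to a trace already known
to vanish, or equal to a trace of `g 0`.
-/

open Matrix

def TraceCommutatorCyclic {R m : Type*} [CommRing R] [Fintype m]
    (g : Matrix m m R → Matrix m m R) : Prop :=
  ∀ x y z : Matrix m m R, (x * g (y * z - z * y)).trace = (z * g (x * y - y * x)).trace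

section
variable {R : Type*} [CommRing R] {m : Type*} [Fintype m] [DecidableEq m]

theorem traceCommutatorCyclic_of_assoc (g : Matrix m m R → Matrix m m R)
    (star : Matrix m m R → Matrix m m R → Matrix m m R)
    (hstar : ∀ x y, star x y = x * y + g (x * y - y * x))
    (hA : ∀ x y z, star x (star y z) = star (star x y) z)
    (hT : ∀ x y, (star x y).trace = (x * y).trace) :
    TraceCommutatorCyclic g := by
  intro x y z
  have h := hT x (star y z)
  rw [hA, hT, hstar y z, hstar x y, mul_add, add_mul, trace_add, trace_add,
    trace_mul_comm (g _) z, mul_assoc] at h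
  exact (add_left_cancel h).symm

variable {g : Matrix m m R →ₗ[R] Matrix m m R} {i j : m}

theorem trace_single_mul_map_self_eq_zero (hg : TraceCommutatorCyclic g) (hij : i ≠ j) :
    (single i j (1 : R) * g (single i j 1)).trace = 0 := by
  simpa [single_mul_single_of_ne _ _ _ _ hij.symm] using
    hg (single i j 1) (single i j 1) (single j j 1)

theorem trace_single_mul_map_single_sub_single_eq_zero (hg : TraceCommutatorCyclic g) :
    (single i j (1 : R) * g (single i i 1 - single j j 1)).trace = 0 := by
  simpa using hg (single i j 1) (single i j 1) (single j i 1)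

variable [IsDomain R]

theorem trace_single_right_mul_map_single_eq_zero (h2 : (2 : R) ≠ 0)
    (hg : TraceCommutatorCyclic g) (hij : i ≠ j) :
    (single j j (1 : R) * g (single i j 1)).trace = 0 := by
  have h := hg (single j j 1) (single i j 1) (single j j 1)
  simp only [single_mul_single_same, single_mul_single_of_ne _ _ _ _ hij.symm, mul_one, sub_zero,
    zero_sub, map_neg, mul_neg, trace_neg] at h
  exact mul_left_cancel₀ h2 (by linear_combination h)

theorem trace_single_left_mul_map_single_eq_zero (h2 : (2 : R) ≠ 0)
    (hg : TraceCommutatorCyclic g) (hij : i ≠ j) :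
    (single i i (1 : R) * g (single i j 1)).trace = 0 := by
  have h := hg (single i i 1) (single i j 1) (single j j 1)
  simp only [single_mul_single_same, single_mul_single_of_ne _ _ _ _ hij.symm, mul_one,
    sub_zero] at h
  rw [h, trace_single_right_mul_map_single_eq_zero h2 hg hij]

theorem trace_single_swap_mul_map_single_sub_single_eq_zero (h2 : (2 : R) ≠ 0)
    (hg : TraceCommutatorCyclic g) :
    (single j i (1 : R) * g (single i i 1 - single j j 1)).trace = 0 := by
  have h := hg (single j i 1) (single i j 1) (single j i 1)
  rw [single_mul_single_same, single_mul_single_same, mul_one, ← neg_sub (single i i 1),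
    map_neg, mul_neg, trace_neg] at h
  exact mul_left_cancel₀ h2 (by linear_combination h)

end

/-- Lemma 3, equations (15)–(19): for distinct indices `i, j`,
`tr(e_{jj} g(e_{ij})) = tr(e_{ii} g(e_{ij})) = tr(e_{ij} g(e_{ij})) = tr(e_{ij} g(e_{ii}−e_{jj})) = tr(e_{ji} g(e_{ii}−e_{jj})) = 0`. -/
theorem stmt_7 {F : Type*} [Field F] (h2 : (2 : F) ≠ 0) {n : ℕ}
    (g : Matrix (Fin n) (Fin n) F →ₗ[F] Matrix (Fin n) (Fin n) F)
    (star : Matrix (Fin n) (Fin n) F → Matrix (Fin n) (Fin n) F → Matrix (Fin n) (Fin n) F)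
    (hstar : ∀ x y : Matrix (Fin n) (Fin n) F, star x y = x * y + g (x * y - y * x))
    (hA : ∀ x y z : Matrix (Fin n) (Fin n) F, star x (star y z) = star (star x y) z)
    (hT : ∀ x y : Matrix (Fin n) (Fin n) F, (star x y).trace = (x * y).trace)
    (i j : Fin n) (hij : i ≠ j) :
    (Matrix.single j j (1 : F) * g (Matrix.single i j (1 : F))).trace = 0 ∧
    (Matrix.single i i (1 : F) * g (Matrix.single i j (1 : F))).trace = 0 ∧
    (Matrix.single i j (1 : F) * g (Matrix.single i j (1 : F))).trace = 0 ∧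
    (Matrix.single i j (1 : F) * g (Matrix.single i i (1 : F) - Matrix.single j j (1 : F))).trace = 0 ∧
    (Matrix.single j i (1 : F) * g (Matrix.single i i (1 : F) - Matrix.single j j (1 : F))).trace = 0 := by
  have hg := traceCommutatorCyclic_of_assoc g star hstar hA hT
  exact ⟨trace_single_right_mul_map_single_eq_zero h2 hg hij,
    trace_single_left_mul_map_single_eq_zero h2 hg hij,
    trace_single_mul_map_self_eq_zero hg hij,
    trace_single_mul_map_single_sub_single_eq_zero hg,
    trace_single_swap_mul_map_single_sub_single_eq_zero h2 hg⟩
end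

section
/- Let i,j ∈ {1,…,n} be distinct (so n ≥ 2). Then tr(e_{ii} · g(e_{ii} − e_{jj})) = tr(e_{ji} · g(e_{ij})) and tr(e_{jj} · g(e_{ii} − e_{jj})) = −tr(e_{ji} · g(e_{ij})). -/
/-!
Since `tr (a ⋆ b) = tr (a b)`, taking the trace of `x ⋆ (y ⋆ z) = (x ⋆ y) ⋆ z` gives
`tr (x (y ⋆ z)) = tr ((x ⋆ y) z)`, that is `tr (x g[y, z]) = tr (g[x, y] z)`. With `x = e_kk`,
`y = e_ij`, `z = e_ji` the left side is `tr (e_kk g(e_ii - e_jj))`, while `[e_kk, e_ij]` is `e_ij`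
for `k = i` and `-e_ij` for `k = j`.
-/

namespace Matrix

variable {m R : Type*} [Fintype m] [CommRing R] (g : Matrix m m R →ₗ[R] Matrix m m R)
  {star : Matrix m m R → Matrix m m R → Matrix m m R}

theorem trace_mul_apply_commutator
    (hstar : ∀ x y, star x y = x * y + g (x * y - y * x))
    (hA : ∀ x y z, star x (star y z) = star (star x y) z)
    (hT : ∀ x y, (star x y).trace = (x * y).trace) (x y z : Matrix m m R) :
    (x * g (y * z - z * y)).trace = (g (x * y - y * x) * z).trace := by
  have hassoc := congrArg trace (hA x y z)
  rw [hT, hT, hstar y z, hstar x y, mul_add, add_mul, trace_add, trace_add, mul_assoc] at hassoc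
  exact add_left_cancel hassoc

theorem trace_single_mul_apply_sub_single [DecidableEq m]
    (hstar : ∀ x y, star x y = x * y + g (x * y - y * x))
    (hA : ∀ x y z, star x (star y z) = star (star x y) z)
    (hT : ∀ x y, (star x y).trace = (x * y).trace) (i j k : m) :
    (single k k 1 * g (single i i 1 - single j j 1)).trace =
      (single j i 1 * g (single k k 1 * single i j 1 - single i j 1 * single k k 1)).trace := by
  have hcomm : single i j (1 : R) * single j i 1 - single j i 1 * single i j 1 =
      single i i 1 - single j j 1 := by
    simp only [single_mul_single_same, mul_one]
  rw [← hcomm, trace_mul_apply_commutator g hstar hA hT, trace_mul_comm]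

end Matrix

open Matrix in
theorem stmt_8_general {F : Type*} [Field F] {n : ℕ}
    (g : Matrix (Fin n) (Fin n) F →ₗ[F] Matrix (Fin n) (Fin n) F)
    (star : Matrix (Fin n) (Fin n) F → Matrix (Fin n) (Fin n) F → Matrix (Fin n) (Fin n) F)
    (hstar : ∀ x y : Matrix (Fin n) (Fin n) F, star x y = x * y + g (x * y - y * x))
    (hA : ∀ x y z : Matrix (Fin n) (Fin n) F, star x (star y z) = star (star x y) z)
    (hT : ∀ x y : Matrix (Fin n) (Fin n) F, (star x y).trace = (x * y).trace)
    (i j : Fin n) (hij : i ≠ j) :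
    (Matrix.single i i (1 : F) * g (Matrix.single i i (1 : F) - Matrix.single j j (1 : F))).trace = (Matrix.single j i (1 : F) * g (Matrix.single i j (1 : F))).trace ∧
    (Matrix.single j j (1 : F) * g (Matrix.single i i (1 : F) - Matrix.single j j (1 : F))).trace = -(Matrix.single j i (1 : F) * g (Matrix.single i j (1 : F))).trace := by
  constructor
  all_goals
    rw [trace_single_mul_apply_sub_single g hstar hA hT]
    simp [single_mul_single_of_ne _ _ _ (h := hij.symm)]

/-- For distinct indices `i, j`:
`tr(e_{ii} g(e_{ii}−e_{jj})) = tr(e_{ji} g(e_{ij}))` and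
`tr(e_{jj} g(e_{ii}−e_{jj})) = −tr(e_{ji} g(e_{ij}))`. -/
theorem stmt_8 {F : Type*} [Field F] (h2 : (2 : F) ≠ 0) {n : ℕ}
    (g : Matrix (Fin n) (Fin n) F →ₗ[F] Matrix (Fin n) (Fin n) F)
    (star : Matrix (Fin n) (Fin n) F → Matrix (Fin n) (Fin n) F → Matrix (Fin n) (Fin n) F)
    (hstar : ∀ x y : Matrix (Fin n) (Fin n) F, star x y = x * y + g (x * y - y * x))
    (hA : ∀ x y z : Matrix (Fin n) (Fin n) F, star x (star y z) = star (star x y) z)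
    (hT : ∀ x y : Matrix (Fin n) (Fin n) F, (star x y).trace = (x * y).trace)
    (i j : Fin n) (hij : i ≠ j) :
    (Matrix.single i i (1 : F) * g (Matrix.single i i (1 : F) - Matrix.single j j (1 : F))).trace = (Matrix.single j i (1 : F) * g (Matrix.single i j (1 : F))).trace ∧
    (Matrix.single j j (1 : F) * g (Matrix.single i i (1 : F) - Matrix.single j j (1 : F))).trace = -(Matrix.single j i (1 : F) * g (Matrix.single i j (1 : F))).trace :=
  stmt_8_general g star hstar hA hT i j hij
end

section
/- Let i,j ∈ {1,…,n} be distinct (so n ≥ 2). Then g(e_{ij}) is a scalar multiple of the matrix unit e_{ij}; more precisely, g(e_{ij}) = tr(e_{ji} · g(e_{ij})) · e_{ij}. -/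
/-!
Let `e = eᵢⱼ` and `G = g(e)`. Associativity of `⋆` on the triples `(eᵢᵢ, e, eᵢᵢ)`,
`(eⱼⱼ, e, eⱼⱼ)` and `(e, eᵢᵢ, e)` gives the Peirce-type identities
`G = eᵢᵢ G + G eᵢᵢ`, `G = eⱼⱼ G + G eⱼⱼ` and `e G + G e = 0`.
The first two kill every entry of `G` outside positions `(i, j)` and `(j, i)`, and the third
kills the `(j, i)` entry.
-/

open Matrix

section DeformedProduct

variable {R M : Type*} [Ring R] [FunLike M R R] [AddMonoidHomClass M R R] (g : M)
  (star : R → R → R) (hstar : ∀ x y, star x y = x * y + g (x * y - y * x))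
  (hA : ∀ x y z, star x (star y z) = star (star x y) z)

include hstar hA

theorem map_eq_mul_map_add_map_mul_of_left {p x : R} (hpx : p * x = x) (hxp : x * p = 0) :
    g x = p * g x + g x * p := by
  have h := hA p x p
  simp only [hstar, hpx, hxp, mul_add, add_mul, mul_neg, neg_mul, zero_add, zero_sub,
    sub_zero, map_neg, map_add, map_sub] at h
  exact eq_of_sub_eq_zero (by rw [← sub_eq_zero.mpr h]; abel)

theorem map_eq_mul_map_add_map_mul_of_right {q x : R} (hqx : q * x = 0) (hxq : x * q = x) :
    g x = q * g x + g x * q := by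
  have h := hA q x q
  simp only [hstar, hqx, hxq, mul_add, add_mul, mul_neg, neg_mul, zero_add, zero_sub,
    sub_zero, map_neg, map_add, map_sub] at h
  exact eq_of_sub_eq_zero (by rw [← sub_eq_zero.mpr h.symm]; abel)

theorem mul_map_add_map_mul_eq_zero {p x : R} (hpx : p * x = x) (hxp : x * p = 0)
    (hxx : x * x = 0) : x * g x + g x * x = 0 := by
  have h := hA x p x
  simp only [hstar, hpx, hxp, hxx, mul_add, add_mul, mul_neg, neg_mul, zero_add, zero_sub,
    sub_zero, map_neg, map_sub] at h
  rw [← sub_eq_zero.mpr h]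
  abel

end DeformedProduct

namespace Matrix

variable {n R : Type*} [Fintype n] [DecidableEq n] [Ring R] {G : Matrix n n R}

theorem apply_eq_zero_of_eq_single_mul_add_mul_single {i k l : n}
    (h : G = single i i 1 * G + G * single i i 1) (hkl : k = i ↔ l = i) : G k l = 0 := by
  have hentry := congrFun (congrFun h k) l
  by_cases hk : k = i
  · obtain rfl := hk
    obtain rfl := hkl.mp rfl
    simpa using hentry
  · simpa [hk, hkl.not.mp hk] using hentry

theorem eq_smul_single_of_eq_single_mul_add_mul_single {i j : n} (hij : i ≠ j)
    (hi : G = single i i 1 * G + G * single i i 1) (hj : G = single j j 1 * G + G * single j j 1)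
    (hanti : single i j 1 * G + G * single i j 1 = 0) : G = G i j • single i j 1 := by
  ext k l
  by_cases hkl : i = k ∧ j = l
  · obtain ⟨rfl, rfl⟩ := hkl
    simp
  rw [smul_apply, single_apply_of_ne _ _ _ _ _ hkl, smul_zero]
  by_cases hji : k = j ∧ l = i
  · simpa [hji.1, hji.2, hij] using congrFun (congrFun hanti i) i
  by_cases hki : k = i ↔ l = i
  · exact apply_eq_zero_of_eq_single_mul_add_mul_single hi hki
  · exact apply_eq_zero_of_eq_single_mul_add_mul_single hj (by grind)

end Matrix

theorem stmt_10_general {F : Type*} [Field F] {n : ℕ}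
    (g : Matrix (Fin n) (Fin n) F →ₗ[F] Matrix (Fin n) (Fin n) F)
    (star : Matrix (Fin n) (Fin n) F → Matrix (Fin n) (Fin n) F → Matrix (Fin n) (Fin n) F)
    (hstar : ∀ x y : Matrix (Fin n) (Fin n) F, star x y = x * y + g (x * y - y * x))
    (hA : ∀ x y z : Matrix (Fin n) (Fin n) F, star x (star y z) = star (star x y) z)
    (i j : Fin n) (hij : i ≠ j) :
    g (Matrix.single i j (1 : F)) = (Matrix.single j i (1 : F) * g (Matrix.single i j (1 : F))).trace • Matrix.single i j (1 : F) := by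
  have hii_ij : single i i (1 : F) * single i j 1 = single i j 1 := by simp
  have hij_ii : single i j (1 : F) * single i i 1 = 0 := single_mul_single_of_ne _ _ _ _ hij.symm _
  have hjj_ij : single j j (1 : F) * single i j 1 = 0 := single_mul_single_of_ne _ _ _ _ hij.symm _
  have hij_jj : single i j (1 : F) * single j j 1 = single i j 1 := by simp
  have hsq : single i j (1 : F) * single i j 1 = 0 := single_mul_single_of_ne _ _ _ _ hij.symm _
  rw [trace_single_mul, one_smul]
  exact eq_smul_single_of_eq_single_mul_add_mul_single hij
    (map_eq_mul_map_add_map_mul_of_left g star hstar hA hii_ij hij_ii)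
    (map_eq_mul_map_add_map_mul_of_right g star hstar hA hjj_ij hij_jj)
    (mul_map_add_map_mul_eq_zero g star hstar hA hii_ij hij_ii hsq)

/-- For distinct indices `i, j`, `g(e_{ij})` is the scalar multiple
`tr(e_{ji} g(e_{ij})) • e_{ij}` of the matrix unit `e_{ij}`. -/
theorem stmt_10 {F : Type*} [Field F] (h2 : (2 : F) ≠ 0) {n : ℕ}
    (g : Matrix (Fin n) (Fin n) F →ₗ[F] Matrix (Fin n) (Fin n) F)
    (star : Matrix (Fin n) (Fin n) F → Matrix (Fin n) (Fin n) F → Matrix (Fin n) (Fin n) F)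
    (hstar : ∀ x y : Matrix (Fin n) (Fin n) F, star x y = x * y + g (x * y - y * x))
    (hA : ∀ x y z : Matrix (Fin n) (Fin n) F, star x (star y z) = star (star x y) z)
    (hT : ∀ x y : Matrix (Fin n) (Fin n) F, (star x y).trace = (x * y).trace)
    (i j : Fin n) (hij : i ≠ j) :
    g (Matrix.single i j (1 : F)) = (Matrix.single j i (1 : F) * g (Matrix.single i j (1 : F))).trace • Matrix.single i j (1 : F) :=
  stmt_10_general g star hstar hA i j hij
end

section
/- Let i,j ∈ {1,…,n} be distinct (so n ≥ 2). Then g(e_{ii} − e_{jj}) = tr(e_{ji} · g(e_{ij})) · (e_{ii} − e_{jj}). -/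
/-!
Write `⁅x, y⁆ = x * y - y * x`, `E = e_{ij}`, `E' = e_{ji}`, `H = ⁅E, E'⁆ = e_{ii} - e_{jj}` and
`D = g H`. Associativity of `⋆` becomes an identity in `g` alone. Fed with a square-zero
element `x`, it says that `g ⁅x, y⁆` anticommutes with `x`; fed with an element `w` annihilating
`x` and `y` on both sides, that `g ⁅x, y⁆` anticommutes with `w`. So `D` anticommutes with `E`,
`E'` and every `e_{rr}`, `r ≠ i, j`, which forces `D = c H` (using `2 ≠ 0`). The triple
`(E, E, E')` then gives `(1 + 2c) g E = -c E`, so `g E = ν E`, and the triple `(e_{ii}, E, E')`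
gives `ν (1 + c) = 0 = c (1 + ν)`, whence `ν = c = tr (E' g E)`.
-/

open Matrix

attribute [local instance] LieRing.ofAssociativeRing

/-- Associativity of `x ⋆ y := x * y + g ⁅x, y⁆`, with the common term `x * y * z` cancelled. -/
def TwistAssoc {A : Type*} [Ring A] (g : A → A) : Prop :=
  ∀ x y z : A, x * g ⁅y, z⁆ + g ⁅x, y * z + g ⁅y, z⁆⁆ = g ⁅x, y⁆ * z + g ⁅x * y + g ⁅x, y⁆, z⁆

def AntiCommute {A : Type*} [Mul A] [Add A] [Zero A] (a b : A) : Prop := a * b + b * a = 0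

namespace TwistAssoc

section Ring

variable {A G : Type*} [Ring A]

theorem of_assoc {g : A → A} {star : A → A → A}
    (hstar : ∀ x y, star x y = x * y + g (x * y - y * x))
    (hA : ∀ x y z, star x (star y z) = star (star x y) z) : TwistAssoc g := by
  intro x y z
  have h := hA x y z
  simp only [hstar, ← Ring.lie_def] at h
  simpa only [mul_add, add_mul, mul_assoc, add_assoc, add_right_inj] using h

variable [FunLike G A A] [AddMonoidHomClass G A A] {g : G}

theorem map_lie_swap (g : G) (x y : A) : g ⁅y, x⁆ = -g ⁅x, y⁆ := by
  rw [← map_neg, lie_skew]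

theorem antiCommute_left_of_sq_eq_zero (hg : TwistAssoc g) {x : A} (hx : x * x = 0) (y : A) :
    AntiCommute x (g ⁅x, y⁆) := by
  have h := hg x y x
  have hxyx : ⁅x, y * x⁆ = ⁅x * y, x⁆ := by
    rw [Ring.lie_def, Ring.lie_def, mul_assoc y, hx, ← mul_assoc x x, hx, mul_zero, zero_mul,
      mul_assoc]
  rw [map_lie_swap g x y] at h
  simp only [lie_add, add_lie, lie_neg, map_add, map_neg, hxyx, map_lie_swap g (g ⁅x, y⁆) x] at h
  rw [← sub_eq_zero] at h
  rw [AntiCommute, ← neg_eq_zero, ← h, mul_neg]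
  abel

theorem antiCommute_right_of_sq_eq_zero (hg : TwistAssoc g) {y : A} (hy : y * y = 0) (x : A) :
    AntiCommute y (g ⁅x, y⁆) := by
  rw [AntiCommute, map_lie_swap g y x, mul_neg, neg_mul, ← neg_add, neg_eq_zero]
  exact hg.antiCommute_left_of_sq_eq_zero hy x

theorem antiCommute_of_mul_eq_zero (hg : TwistAssoc g) {x y w : A} (hxw : x * w = 0)
    (hwx : w * x = 0) (hyw : y * w = 0) (hwy : w * y = 0) : AntiCommute w (g ⁅x, y⁆) := by
  have h₁ := hg x y w
  have h₂ := hg w x y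
  have hyw' : ⁅y, w⁆ = 0 := by rw [Ring.lie_def, hyw, hwy, sub_self]
  have hwx' : ⁅w, x⁆ = 0 := by rw [Ring.lie_def, hwx, hxw, sub_self]
  have hxyw : ⁅x * y, w⁆ = 0 := by rw [Ring.lie_def, mul_assoc, hyw, ← mul_assoc, hwx]; simp
  have hwxy : ⁅w, x * y⁆ = 0 := by rw [Ring.lie_def, ← mul_assoc, hwx, mul_assoc, hyw]; simp
  simp only [hyw', hyw, hxyw, map_zero, lie_zero, add_lie, mul_zero, zero_add, add_zero] at h₁
  simp only [hwx', hwx, hwxy, map_zero, zero_lie, lie_add, zero_mul, zero_add, add_zero,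
    map_lie_swap g (g ⁅x, y⁆) w] at h₂
  set D := g ⁅x, y⁆
  calc w * D + D * w = (w * D + -g ⁅D, w⁆) + (D * w + g ⁅D, w⁆) := by abel
    _ = 0 := by rw [h₂, ← h₁, add_zero]

theorem lie_map_lie_of_sq_eq_zero (hg : TwistAssoc g) {x : A} (hx : x * x = 0) (y : A) :
    x * g ⁅x, y⁆ + g ⁅x, x * y⁆ + g ⁅x, g ⁅x, y⁆⁆ = 0 := by
  have h := hg x x y
  simp only [lie_self, map_zero, zero_mul, hx, zero_add, zero_lie, lie_add, map_add] at h
  rw [← h, add_assoc]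

end Ring

end TwistAssoc

namespace Matrix

variable {ι R : Type*} [Fintype ι] [DecidableEq ι] [Ring R] {M : Matrix ι ι R} {i j : ι}

theorem lie_single_single :
    ⁅single i j (1 : R), single j i (1 : R)⁆ = single i i 1 - single j j 1 := by
  simp [Ring.lie_def]

theorem apply_eq_zero_of_antiCommute_single (h : AntiCommute (single i j (1 : R)) M) {a : ι}
    (ha : a ≠ i) : M a i = 0 := by
  simpa [ha] using congrFun₂ h a j

theorem apply_add_apply_eq_zero_of_antiCommute_single (h : AntiCommute (single i j (1 : R)) M) :
    M i i + M j j = 0 := by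
  simpa [add_comm] using congrFun₂ h i j

theorem eq_smul_sub_of_antiCommute_single [NoZeroDivisors R] (h2 : (2 : R) ≠ 0) (hij : i ≠ j)
    (hi : AntiCommute (single i j (1 : R)) M) (hj : AntiCommute (single j i (1 : R)) M)
    (hr : ∀ r, r ≠ i → r ≠ j → AntiCommute (single r r (1 : R)) M) :
    M = M i i • (single i i 1 - single j j 1) := by
  have hjj : M j j = -M i i :=
    eq_neg_of_add_eq_zero_right (apply_add_apply_eq_zero_of_antiCommute_single hi)
  have hoff : ∀ {a b}, a ≠ b → M a b = 0 := by
    intro a b hab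
    rcases eq_or_ne b i with rfl | hbi
    · exact apply_eq_zero_of_antiCommute_single hi hab
    rcases eq_or_ne b j with rfl | hbj
    · exact apply_eq_zero_of_antiCommute_single hj hab
    · exact apply_eq_zero_of_antiCommute_single (hr b hbi hbj) hab
  have hdiag : ∀ r, r ≠ i → r ≠ j → M r r = 0 := by
    intro r hri hrj
    have h := apply_add_apply_eq_zero_of_antiCommute_single (hr r hri hrj)
    rw [← two_mul] at h
    exact (mul_eq_zero.1 h).resolve_left h2
  ext a b
  rcases eq_or_ne a b with rfl | hab
  · rcases eq_or_ne a i with rfl | hai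
    · simp [hij.symm]
    rcases eq_or_ne a j with rfl | haj
    · simp [hjj, hai.symm]
    · simp [hdiag a hai haj, hai.symm, haj.symm]
  · have : ∀ k, single k k (1 : R) a b = 0 :=
      fun k => single_apply_of_ne _ _ _ _ _ fun h => hab (h.1.symm.trans h.2)
    simp [hoff hab, this]

end Matrix

namespace TwistAssoc

theorem map_single_sub_single {ι R G : Type*} [Fintype ι] [DecidableEq ι] [Ring R]
    [NoZeroDivisors R] [FunLike G (Matrix ι ι R) (Matrix ι ι R)]
    [AddMonoidHomClass G (Matrix ι ι R) (Matrix ι ι R)] {g : G} (hg : TwistAssoc g)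
    (h2 : (2 : R) ≠ 0) {i j : ι} (hij : i ≠ j) :
    g (single i i 1 - single j j 1) =
      g (single i i 1 - single j j 1) i i • (single i i 1 - single j j 1) := by
  have hH : g (single i i 1 - single j j 1) = g ⁅single i j (1 : R), single j i (1 : R)⁆ := by
    rw [lie_single_single]
  rw [hH]
  refine eq_smul_sub_of_antiCommute_single h2 hij ?_ ?_ fun r hri hrj => ?_
  · exact hg.antiCommute_left_of_sq_eq_zero (by simp [hij.symm]) _
  · exact hg.antiCommute_right_of_sq_eq_zero (by simp [hij]) _
  · exact hg.antiCommute_of_mul_eq_zero (by simp [hrj.symm]) (by simp [hri]) (by simp [hri.symm])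
      (by simp [hrj])

section Field

variable {ι F : Type*} [Fintype ι] [DecidableEq ι] [Field F] {g : Matrix ι ι F →ₗ[F] Matrix ι ι F}
  {i j : ι} {c : F}

theorem one_add_two_mul_smul_map_single (hg : TwistAssoc g) (hij : i ≠ j)
    (hD : g (single i i 1 - single j j 1) = c • (single i i 1 - single j j 1)) :
    (1 + 2 * c) • g (single i j 1) = -c • single i j 1 := by
  have h := hg.lie_map_lie_of_sq_eq_zero (x := single i j (1 : F)) (by simp [hij.symm])
    (single j i 1)
  rw [lie_single_single, hD] at h
  simp only [Ring.lie_def, mul_smul_comm, smul_mul_assoc, mul_sub, sub_mul, single_mul_single_same,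
    mul_one, single_mul_single_of_ne, ne_eq, hij.symm, not_false_eq_true, map_sub, map_neg,
    map_smul, zero_sub, sub_zero] at h
  linear_combination (norm := module) -h

theorem eq_of_map_single_eq_smul (hg : TwistAssoc g) (hij : i ≠ j)
    (hD : g (single i i 1 - single j j 1) = c • (single i i 1 - single j j 1)) {ν : F}
    (hν : g (single i j 1) = ν • single i j 1) : ν = c := by
  have h := hg (single i i 1) (single i j 1) (single j i 1)
  have hlie_diag : ⁅single i i (1 : F), single i j (1 : F)⁆ = single i j 1 := by
    simp [Ring.lie_def, hij.symm]
  have hdiag_mul :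
      single i i 1 * (c • (single i i 1 - single j j 1)) = c • single i i (1 : F) := by
    simp [mul_sub, hij]
  have hlie_zero : ⁅single i i (1 : F), single i j (1 : F) * single j i 1 +
      c • (single i i 1 - single j j (1 : F))⁆ = 0 := by
    simp [Ring.lie_def, mul_add, add_mul, mul_sub, sub_mul, hij, hij.symm]
  have hsingle_mul : ν • single i j (1 : F) * single j i 1 = ν • single i i 1 := by simp
  have hlie_sum : ⁅single i i (1 : F) * single i j 1 + ν • single i j 1, single j i (1 : F)⁆ =
      (1 + ν) • (single i i 1 - single j j 1) := by
    simp only [Ring.lie_def, add_mul, mul_add, smul_mul_assoc, mul_smul_comm,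
      single_mul_single_same, mul_one]
    module
  rw [lie_single_single, hD, hlie_diag, hν, hdiag_mul, hlie_zero, hsingle_mul, hlie_sum, map_zero,
    add_zero, map_smul, hD] at h
  have hii := congrFun₂ h i i
  have hjj := congrFun₂ h j j
  simp [hij, hij.symm, -mul_eq_zero] at hii hjj
  linear_combination -hii - hjj

theorem map_single_of_map_sub (hg : TwistAssoc g) (hij : i ≠ j)
    (hD : g (single i i 1 - single j j 1) = c • (single i i 1 - single j j 1)) :
    g (single i j 1) = c • single i j 1 := by
  have hlin := hg.one_add_two_mul_smul_map_single hij hD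
  have hc : 1 + 2 * c ≠ 0 := by
    intro h0
    rw [h0, zero_smul] at hlin
    have hc0 : c = 0 := by simpa using congrFun₂ hlin i j
    simp [hc0] at h0
  obtain ⟨ν, hν⟩ : ∃ ν : F, g (single i j 1) = ν • single i j 1 :=
    ⟨_, by rw [← inv_smul_smul₀ hc (g _), hlin, smul_smul]⟩
  rw [hν, hg.eq_of_map_single_eq_smul hij hD hν]

end Field

end TwistAssoc

theorem stmt_11_general {F : Type*} [Field F] (h2 : (2 : F) ≠ 0) {n : ℕ}
    (g : Matrix (Fin n) (Fin n) F →ₗ[F] Matrix (Fin n) (Fin n) F)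
    (star : Matrix (Fin n) (Fin n) F → Matrix (Fin n) (Fin n) F → Matrix (Fin n) (Fin n) F)
    (hstar : ∀ x y : Matrix (Fin n) (Fin n) F, star x y = x * y + g (x * y - y * x))
    (hA : ∀ x y z : Matrix (Fin n) (Fin n) F, star x (star y z) = star (star x y) z)
    (i j : Fin n) (hij : i ≠ j) :
    g (Matrix.single i i (1 : F) - Matrix.single j j (1 : F)) = (Matrix.single j i (1 : F) * g (Matrix.single i j (1 : F))).trace • (Matrix.single i i (1 : F) - Matrix.single j j (1 : F)) := by
  have hg : TwistAssoc g := .of_assoc hstar hA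
  have hD := hg.map_single_sub_single h2 hij
  rw [hg.map_single_of_map_sub hij hD, trace_single_mul, one_smul, Matrix.smul_apply,
    single_apply_same, smul_eq_mul, mul_one]
  exact hD

/-- For distinct indices `i, j`:
`g(e_{ii} − e_{jj}) = tr(e_{ji} g(e_{ij})) • (e_{ii} − e_{jj})`. -/
theorem stmt_11 {F : Type*} [Field F] (h2 : (2 : F) ≠ 0) {n : ℕ}
    (g : Matrix (Fin n) (Fin n) F →ₗ[F] Matrix (Fin n) (Fin n) F)
    (star : Matrix (Fin n) (Fin n) F → Matrix (Fin n) (Fin n) F → Matrix (Fin n) (Fin n) F)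
    (hstar : ∀ x y : Matrix (Fin n) (Fin n) F, star x y = x * y + g (x * y - y * x))
    (hA : ∀ x y z : Matrix (Fin n) (Fin n) F, star x (star y z) = star (star x y) z)
    (hT : ∀ x y : Matrix (Fin n) (Fin n) F, (star x y).trace = (x * y).trace)
    (i j : Fin n) (hij : i ≠ j) :
    g (Matrix.single i i (1 : F) - Matrix.single j j (1 : F)) = (Matrix.single j i (1 : F) * g (Matrix.single i j (1 : F))).trace • (Matrix.single i i (1 : F) - Matrix.single j j (1 : F)) :=
  stmt_11_general h2 g star hstar hA i j hij
end

section
/- Let n ≥ 2. For distinct i,j ∈ {1,…,n}, set λ_{ij} := tr(e_{ji} · g(e_{ij})). Then λ_{ij} does not depend on the pair (i,j), and this common value λ satisfies λ(λ + 1) = 0, i.e. λ = 0 or λ = −1. -/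
/-!
Note that `λ_ij = tr(e_ji g(e_ij))` is the `(i, j)` entry of `g(e_ij)`.
Write `φ(x, y) = tr(x g(y))` and `[x, y] = xy - yx`. Since `tr(x ⋆ w) = tr(x w)`, associativity
gives `tr(x (y ⋆ z)) = tr((x ⋆ y) z)`, that is `φ(x, [y, z]) = φ(z, [x, y])`. Feeding matrix units
into this cyclic identity shows `λ_ij = λ_jk`, so `λ` is constant, and `g(e_ij) = λ e_ij`.
For `A = e_ij`, `B = e_ji`, `C = e_jj` this gives `A ⋆ C = (1 + λ) A`, so associativity reads
`(1 + λ) W = W ⋆ C` with `W = B ⋆ A`. Pairing with `C` and using `φ(C, [W, C]) = 0` (char ≠ 2)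
yields `(1 + λ) tr(C W) = tr(C W) = 1 + λ`.
-/

open Matrix

section

variable {m R : Type*} [Fintype m] [CommRing R]

theorem trace_mul_star_eq_trace_star_mul (star : Matrix m m R → Matrix m m R → Matrix m m R)
    (hA : ∀ x y z, star x (star y z) = star (star x y) z)
    (hT : ∀ x y, (star x y).trace = (x * y).trace) (x y z : Matrix m m R) :
    (x * star y z).trace = (star x y * z).trace := by
  rw [← hT, hA, hT]

theorem trace_mul_map_commutator_cycle (g : Matrix m m R → Matrix m m R)
    (star : Matrix m m R → Matrix m m R → Matrix m m R)
    (hstar : ∀ x y, star x y = x * y + g (x * y - y * x))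
    (hA : ∀ x y z, star x (star y z) = star (star x y) z)
    (hT : ∀ x y, (star x y).trace = (x * y).trace) (x y z : Matrix m m R) :
    (x * g (y * z - z * y)).trace = (z * g (x * y - y * x)).trace := by
  have h := trace_mul_star_eq_trace_star_mul star hA hT x y z
  rw [hstar, hstar, mul_add, add_mul, trace_add, trace_add, ← mul_assoc,
    trace_mul_comm (g _) z] at h
  exact add_left_cancel h

section

variable (g : Matrix m m R →ₗ[R] Matrix m m R)

theorem trace_mul_map_commutator_self_eq_zero [NoZeroDivisors R] (h2 : (2 : R) ≠ 0)
    (hcyc : ∀ x y z : Matrix m m R, (x * g (y * z - z * y)).trace = (z * g (x * y - y * x)).trace)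
    (x y : Matrix m m R) : (x * g (y * x - x * y)).trace = 0 := by
  have h := hcyc x y x
  rw [← neg_sub (y * x), map_neg, mul_neg, trace_neg] at h
  exact (mul_eq_zero.mp (by linear_combination h : (2 : R) * _ = 0)).resolve_left h2

theorem map_single_apply_diag_eq_zero [DecidableEq m]
    (hcyc : ∀ x y z : Matrix m m R, (x * g (y * z - z * y)).trace = (z * g (x * y - y * x)).trace)
    {a b : m} (hab : a ≠ b) (c : m) :
    g (single a b 1) c c = 0 := by
  -- `e_ab = [e_aa, e_ab]`, and diagonal units commute
  have hcomm : single c c (1 : R) * single a a 1 = single a a 1 * single c c 1 := by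
    rcases eq_or_ne c a with rfl | hca
    · rfl
    · simp [hca, hca.symm]
  have h := hcyc (single c c 1) (single a a 1) (single a b 1)
  simpa [hcomm, hab.symm, trace_single_mul] using h

theorem map_single_apply_eq_map_single_apply_of_ne [DecidableEq m]
    (hcyc : ∀ x y z : Matrix m m R, (x * g (y * z - z * y)).trace = (z * g (x * y - y * x)).trace)
    {i j k : m} (hij : i ≠ j) (hjk : j ≠ k) :
    g (single i j 1) i j = g (single j k 1) j k := by
  have h := hcyc (single j i 1) (single i k 1) (single k j 1)
  simpa [hij.symm, hjk.symm, trace_single_mul] using h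

theorem map_single_apply_eq_of_ne [DecidableEq m]
    (hcyc : ∀ x y z : Matrix m m R, (x * g (y * z - z * y)).trace = (z * g (x * y - y * x)).trace)
    {i j a b : m} (hij : i ≠ j) (hab : a ≠ b) :
    g (single a b 1) a b = g (single i j 1) i j := by
  rcases eq_or_ne b i with rfl | hbi
  · exact map_single_apply_eq_map_single_apply_of_ne g hcyc hab hij
  · exact (map_single_apply_eq_map_single_apply_of_ne g hcyc hab hbi).trans
      (map_single_apply_eq_map_single_apply_of_ne g hcyc hbi hij)

theorem map_single_eq_smul [DecidableEq m]
    (hcyc : ∀ x y z : Matrix m m R, (x * g (y * z - z * y)).trace = (z * g (x * y - y * x)).trace)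
    {i j : m} (hij : i ≠ j) :
    g (single i j 1) = g (single i j 1) i j • single i j 1 := by
  ext p q
  -- `e_ij = [e_ij, e_jj]`
  have h := hcyc (single q p 1) (single i j 1) (single j j 1)
  rw [single_mul_single_same, mul_one, single_mul_single_of_ne (h := hij.symm), sub_zero,
    trace_single_mul, one_smul] at h
  rcases eq_or_ne p i with rfl | hp <;> rcases eq_or_ne q j with rfl | hq
  · simp
  · simp [h, hq.symm, trace_single_mul, map_single_apply_diag_eq_zero g hcyc hq]
  · simp [h, hp, hp.symm, trace_single_mul, map_single_apply_diag_eq_zero g hcyc hp.symm]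
  · simp [h, hp, hp.symm, hq.symm]

end

theorem map_single_apply_mul_add_one_eq_zero [DecidableEq m] [NoZeroDivisors R]
    (h2 : (2 : R) ≠ 0) (g : Matrix m m R →ₗ[R] Matrix m m R)
    (star : Matrix m m R → Matrix m m R → Matrix m m R)
    (hstar : ∀ x y, star x y = x * y + g (x * y - y * x))
    (hA : ∀ x y z, star x (star y z) = star (star x y) z)
    (hT : ∀ x y, (star x y).trace = (x * y).trace) {i j : m} (hij : i ≠ j) :
    g (single i j 1) i j * (g (single i j 1) i j + 1) = 0 := by
  have hcyc := trace_mul_map_commutator_cycle g star hstar hA hT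
  set l := g (single i j 1) i j
  set A := single i j (1 : R)
  set B := single j i (1 : R)
  set C := single j j (1 : R)
  have hBA : B * A = C := by simp [A, B, C]
  have hCC : C * C = C := by simp [C]
  have hAC : star A C = (1 + l) • A := by
    have hgA : g A = l • A := map_single_eq_smul g hcyc hij
    rw [hstar, show A * C = A by simp [A, C], show C * A = 0 by simp [A, C, hij.symm], sub_zero,
      hgA, add_smul, one_smul]
  have hassoc : (1 + l) • star B A = star (star B A) C := by
    rw [← hA, hAC, hstar, hstar]
    simp [smul_sub, map_smul]
  have hCW : (C * star B A).trace = 1 + l := by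
    have hcomm : (C * g (B * A - A * B)).trace = l := by
      rw [hcyc, show C * B = B by simp [B, C], show B * C = 0 by simp [B, C, hij], sub_zero,
        trace_single_mul, one_smul]
      exact map_single_apply_eq_of_ne g hcyc hij hij.symm
    rw [hstar, mul_add, trace_add, hcomm, hBA]
    simp [C]
  have hCWC : (C * star (star B A) C).trace = (C * star B A).trace := by
    rw [hstar, mul_add, trace_add, trace_mul_map_commutator_self_eq_zero g h2 hcyc, add_zero,
      ← mul_assoc, trace_mul_cycle, hCC]
  have := congrArg (fun M => (C * M).trace) hassoc
  simp only [mul_smul_comm, trace_smul, hCWC, hCW, smul_eq_mul] at this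
  linear_combination this

end

theorem stmt_12_general {F : Type*} [Field F] (h2 : (2 : F) ≠ 0) {n : ℕ}
    (g : Matrix (Fin n) (Fin n) F →ₗ[F] Matrix (Fin n) (Fin n) F)
    (star : Matrix (Fin n) (Fin n) F → Matrix (Fin n) (Fin n) F → Matrix (Fin n) (Fin n) F)
    (hstar : ∀ x y : Matrix (Fin n) (Fin n) F, star x y = x * y + g (x * y - y * x))
    (hA : ∀ x y z : Matrix (Fin n) (Fin n) F, star x (star y z) = star (star x y) z)
    (hT : ∀ x y : Matrix (Fin n) (Fin n) F, (star x y).trace = (x * y).trace) :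
    ∃ l : F,
      (∀ i j : Fin n, i ≠ j → (Matrix.single j i (1 : F) * g (Matrix.single i j (1 : F))).trace = l) ∧
      l * (l + 1) = 0 ∧ (l = 0 ∨ l = -1) := by
  simp_rw [trace_single_mul, one_smul]
  by_cases hpair : ∃ i j : Fin n, i ≠ j
  · obtain ⟨i, j, hij⟩ := hpair
    have hcyc := trace_mul_map_commutator_cycle g star hstar hA hT
    have hl := map_single_apply_mul_add_one_eq_zero h2 g star hstar hA hT hij
    exact ⟨_, fun a b hab => map_single_apply_eq_of_ne g hcyc hij hab, hl,
      (mul_eq_zero.mp hl).imp id eq_neg_of_add_eq_zero_left⟩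
  · push Not at hpair
    exact ⟨0, fun i j hij => absurd (hpair i j) hij, by simp, by simp⟩

/-- For `n ≥ 2`, the scalar `λ_{ij} := tr(e_{ji} g(e_{ij}))` is independent of the
pair of distinct indices `(i, j)`, and the common value `λ` satisfies `λ(λ+1) = 0`,
i.e. `λ = 0` or `λ = −1`. -/
theorem stmt_12 {F : Type*} [Field F] (h2 : (2 : F) ≠ 0) {n : ℕ}
    (g : Matrix (Fin n) (Fin n) F →ₗ[F] Matrix (Fin n) (Fin n) F)
    (star : Matrix (Fin n) (Fin n) F → Matrix (Fin n) (Fin n) F → Matrix (Fin n) (Fin n) F)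
    (hstar : ∀ x y : Matrix (Fin n) (Fin n) F, star x y = x * y + g (x * y - y * x))
    (hA : ∀ x y z : Matrix (Fin n) (Fin n) F, star x (star y z) = star (star x y) z)
    (hT : ∀ x y : Matrix (Fin n) (Fin n) F, (star x y).trace = (x * y).trace)
    (hn : 2 ≤ n) :
    ∃ l : F,
      (∀ i j : Fin n, i ≠ j → (Matrix.single j i (1 : F) * g (Matrix.single i j (1 : F))).trace = l) ∧
      l * (l + 1) = 0 ∧ (l = 0 ∨ l = -1) :=
  stmt_12_general h2 g star hstar hA hT
end

section
/- Let n ≥ 2. There exist λ ∈ F with λ = 0 or λ = −1, and a matrix z ∈ M_n(F), such that g(e_{ij}) = λ·e_{ij} for all distinct i,j ∈ {1,…,n}, and g(e_{ii}) = λ·e_{ii} + z for all i ∈ {1,…,n}. Consequently g(x) = λ·x + tr(x)·z for all x ∈ M_n(F). -/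
/-!
Write `x ⋆ y = x * y + g ⁅x, y⁆`. Associativity of `⋆` is a cubic identity in `g`; specialising it
to `y = x` and to `z = y` and combining the two gives, for every commutator `v = ⁅x, z⁆`,
`g ⁅x, g v⁆ = g (v * x) - x * g v` and `g (v * x + x * v) = x * g v + g v * x`.
On matrix units the second identity forces `g e_ij = α_ij • e_ij` (`i ≠ j`), the first then gives
`α_ij² = -α_ij`, and together they pin down every row of `g (e_ii - e_jj)`. The cubic identity at
`(e_ij, e_jk, e_kk)` shows that `α_ik = α_jk`; with the symmetry `α_ij = α_ji` read off from
`g (e_ii - e_jj)`, all `α_ij` equal one `λ`, and `g (e_ii - e_jj) = λ • (e_ii - e_jj)`. So `g - λ • id`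
vanishes on the off-diagonal units and takes one value `z` on the diagonal ones, i.e.
`g x = λ • x + tr x • z`.
-/

open Matrix

theorem eq_of_ne_of_ne_of_symm_of_left {α β : Type*} {f : α → α → β}
    (hsymm : ∀ i j, i ≠ j → f i j = f j i)
    (hleft : ∀ i j k, i ≠ j → j ≠ k → i ≠ k → f i k = f j k) {i j k l : α}
    (hij : i ≠ j) (hkl : k ≠ l) : f i j = f k l := by
  have hright : ∀ a b c, a ≠ b → b ≠ c → a ≠ c → f c a = f c b := fun a b c hab hbc hac => by
    rw [← hsymm a c hac, hleft a b c hab hbc hac, hsymm b c hbc]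
  have hfirst : ∀ a, a ≠ j → f i j = f a j := fun a haj => by
    rcases eq_or_ne i a with rfl | hia
    · rfl
    · exact hleft i a j hia haj hij
  have hsecond : ∀ a b c, a ≠ b → a ≠ c → f a b = f a c := fun a b c hab hac => by
    rcases eq_or_ne b c with rfl | hbc
    · rfl
    · exact hright b c a hbc hac.symm hab.symm
  rcases eq_or_ne k j with rfl | hkj
  · rw [hsymm i k hij, hsecond k i l hij.symm hkl]
  · rw [hfirst k hkj, hsecond k j l hkj hkl]

namespace Matrix

variable {ι R : Type*} [Fintype ι] [DecidableEq ι] [Semiring R]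

theorem single_one_mul_apply (i j p q : ι) (M : Matrix ι ι R) :
    (single i j (1 : R) * M) p q = if p = i then M j q else 0 := by
  split_ifs with h
  · subst h; simp
  · exact single_mul_apply_of_ne _ _ _ _ _ h M

theorem mul_single_one_apply (i j p q : ι) (M : Matrix ι ι R) :
    (M * single i j (1 : R)) p q = if q = j then M p i else 0 := by
  split_ifs with h
  · subst h; simp
  · exact mul_single_apply_of_ne _ _ _ _ _ h M

theorem row_eq_zero_of_anticommute_single {i j k : ι} {M : Matrix ι ι R}
    (hM : single i j 1 * M + M * single i j 1 = 0) (hkj : k ≠ j) : M j k = 0 := by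
  simpa [single_one_mul_apply, mul_single_one_apply, hkj] using congr_fun₂ hM i k

theorem col_eq_zero_of_anticommute_single {i j k : ι} {M : Matrix ι ι R}
    (hM : single i j 1 * M + M * single i j 1 = 0) (hki : k ≠ i) : M k i = 0 := by
  simpa [single_one_mul_apply, mul_single_one_apply, hki] using congr_fun₂ hM k j

theorem diag_add_eq_zero_of_anticommute_single {i j : ι} {M : Matrix ι ι R}
    (hM : single i j 1 * M + M * single i j 1 = 0) : M j j + M i i = 0 := by
  simpa [single_one_mul_apply, mul_single_one_apply] using congr_fun₂ hM i j

theorem single_one_mul_eq_smul_single {i j : ι} {M : Matrix ι ι R}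
    (hM : ∀ k, k ≠ j → M j k = 0) : single i j 1 * M = M j j • single i j 1 := by
  ext p q
  rw [single_one_mul_apply, smul_apply, single_apply]
  by_cases hq : q = j <;> simp_all [eq_comm]

theorem mul_single_one_eq_smul_single {i j : ι} {M : Matrix ι ι R}
    (hM : ∀ k, k ≠ i → M k i = 0) : M * single i j 1 = M i i • single i j 1 := by
  ext p q
  rw [mul_single_one_apply, smul_apply, single_apply]
  by_cases hp : p = i <;> simp_all [eq_comm]

theorem eq_smul_single_of_mul_add_mul_eq {i j : ι} (hij : i ≠ j) {M : Matrix ι ι R}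
    (hi : single i i 1 * M + M * single i i 1 = M) (hj : single j j 1 * M + M * single j j 1 = M)
    (hM : single i j 1 * M + M * single i j 1 = 0) : M = M i j • single i j 1 := by
  ext p q
  have hi' := congr_fun₂ hi p q
  have hj' := congr_fun₂ hj p q
  simp only [add_apply, single_one_mul_apply, mul_single_one_apply] at hi' hj'
  rw [smul_apply, single_apply, smul_eq_mul]
  by_cases hp : p = i
  · subst hp
    by_cases hq : q = j
    · simp [hq]
    · simpa [hij, hq, Ne.symm hq] using hj'.symm
  · by_cases hqi : q = i
    · subst hqi
      by_cases hpj : p = j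
      · subst hpj
        simpa [hij] using col_eq_zero_of_anticommute_single hM hij.symm
      · simpa [hij, hpj, Ne.symm hp] using hj'.symm
    · simpa [hp, hqi, Ne.symm hp] using hi'.symm

end Matrix

-- Local: as an instance, `LieRing.ofAssociativeRing` also puts a second, syntactically
-- different `Sub` on every ring.
section

attribute [local instance] LieRing.ofAssociativeRing

section DeformedMul

variable {A : Type*} [Ring A]

def deformedMul (g : A → A) (x y : A) : A := x * y + g ⁅x, y⁆

variable {G : Type*} [FunLike G A A] [AddMonoidHomClass G A A] {g : G}

theorem lie_identity_of_associative_deformedMul (hg : Std.Associative (deformedMul g))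
    (x y z : A) :
    x * g ⁅y, z⁆ + g ⁅x, y * z⁆ + g ⁅x, g ⁅y, z⁆⁆ =
      g ⁅x, y⁆ * z + g ⁅x * y, z⁆ + g ⁅g ⁅x, y⁆, z⁆ := by
  have h := (hg.assoc x y z).symm
  simp only [deformedMul, mul_add, add_mul, lie_add, add_lie, map_add, mul_assoc, add_assoc] at h
  simpa only [add_assoc] using add_left_cancel h

theorem map_lie_map_lie_left (hg : Std.Associative (deformedMul g)) (x z : A) :
    g ⁅x, g ⁅x, z⁆⁆ = g (⁅x, z⁆ * x) - x * g ⁅x, z⁆ := by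
  have h := lie_identity_of_associative_deformedMul hg x x z
  have e : ⁅x, z⁆ * x = ⁅x * x, z⁆ - ⁅x, x * z⁆ := by simp only [Ring.lie_def]; noncomm_ring
  simp only [lie_self, map_zero, zero_mul, zero_lie, add_zero, zero_add] at h
  rw [e, map_sub, ← h]
  abel

theorem map_lie_map_lie_right (hg : Std.Associative (deformedMul g)) (x y : A) :
    g ⁅g ⁅x, y⁆, y⁆ = g (y * ⁅x, y⁆) - g ⁅x, y⁆ * y := by
  have h := lie_identity_of_associative_deformedMul hg x y y
  have e : y * ⁅x, y⁆ = ⁅x, y * y⁆ - ⁅x * y, y⁆ := by simp only [Ring.lie_def]; noncomm_ring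
  simp only [lie_self, map_zero, mul_zero, lie_zero, add_zero, zero_add] at h
  rw [e, map_sub, h]
  abel

theorem map_lie_mul_add_mul_lie (hg : Std.Associative (deformedMul g)) (x z : A) :
    g (⁅x, z⁆ * x + x * ⁅x, z⁆) = x * g ⁅x, z⁆ + g ⁅x, z⁆ * x := by
  have h₁ := map_lie_map_lie_left hg x z
  have h₂ := map_lie_map_lie_right hg z x
  have e : ⁅z, x⁆ = -⁅x, z⁆ := neg_eq_iff_eq_neg.mp (lie_skew x z)
  simp only [e, map_neg, neg_lie, mul_neg, neg_mul] at h₂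
  rw [← map_neg, lie_skew, h₁] at h₂
  rw [map_add]
  linear_combination (norm := abel) h₂

end DeformedMul

section MatrixDeformation

variable {ι R : Type*} [Fintype ι] [DecidableEq ι] [CommRing R]
  {g : Matrix ι ι R →ₗ[R] Matrix ι ι R}

theorem map_single_eq_smul_single (hg : Std.Associative (deformedMul g)) {i j : ι} (hij : i ≠ j) :
    g (single i j 1) = g (single i j 1) i j • single i j 1 := by
  apply eq_smul_single_of_mul_add_mul_eq hij
  · simpa [Ring.lie_def, hij, hij.symm] using
      (map_lie_mul_add_mul_lie hg (single i i 1) (single i j 1)).symm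
  · simpa [Ring.lie_def, hij, hij.symm] using
      (map_lie_mul_add_mul_lie hg (single j j 1) (-single i j 1)).symm
  · simpa [Ring.lie_def, hij, hij.symm] using
      (map_lie_mul_add_mul_lie hg (single i j 1) (single j j 1)).symm

theorem mul_self_eq_neg_of_map_single (hg : Std.Associative (deformedMul g)) {i j : ι}
    (hij : i ≠ j) {c : R} (hc : g (single i j 1) = c • single i j 1) : c * c = -c := by
  have e : ⁅single i i (1 : R), single i j (1 : R)⁆ = single i j 1 := by
    simp [Ring.lie_def, hij.symm]
  have h := map_lie_map_lie_left hg (single i i 1) (single i j 1)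
  rw [e, hc, Ring.lie_def, mul_smul_comm, smul_mul_assoc, ← smul_sub, ← Ring.lie_def, e,
    map_smul, hc] at h
  simpa [hij.symm] using congr_fun₂ h i j

theorem single_mul_map_single_sub_single (hg : Std.Associative (deformedMul g)) {i j : ι}
    (hij : i ≠ j) {c : R} (hc : g (single i j 1) = c • single i j 1) (hc2 : c * c = -c) :
    single i i 1 * g (single i i 1 - single j j 1) = c • single i i 1 ∧
      single j j 1 * g (single i i 1 - single j j 1) = -c • single j j 1 := by
  set d := g (single i i 1 - single j j 1)
  have e₁ : ⁅single i j (1 : R), single j i (1 : R)⁆ = single i i 1 - single j j 1 := by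
    simp [Ring.lie_def]
  have e₂ : ⁅single j i (1 : R), -single i j (1 : R)⁆ = single i i 1 - single j j 1 := by
    simp [Ring.lie_def, neg_add_eq_sub]
  have e₃ : (single i i 1 - single j j 1) * single i j (1 : R) = single i j 1 := by
    simp [sub_mul, hij.symm]
  have hd₁ : single i j 1 * d + d * single i j 1 = 0 := by
    have e : (single i i 1 - single j j 1) * single i j (1 : R) +
        single i j 1 * (single i i 1 - single j j 1) = 0 := by
      simp [sub_mul, mul_sub, hij.symm]
    have h := map_lie_mul_add_mul_lie hg (single i j 1) (single j i 1)
    rw [e₁, e, map_zero] at h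
    exact h.symm
  have hd₂ : single j i 1 * d + d * single j i 1 = 0 := by
    have e : (single i i 1 - single j j 1) * single j i (1 : R) +
        single j i 1 * (single i i 1 - single j j 1) = 0 := by
      simp [sub_mul, mul_sub, hij]
    have h := map_lie_mul_add_mul_lie hg (single j i 1) (-single i j 1)
    rw [e₂, e, map_zero] at h
    exact h.symm
  have hrow_i : ∀ k, k ≠ i → d i k = 0 := fun k hk => row_eq_zero_of_anticommute_single hd₂ hk
  have hrow_j : ∀ k, k ≠ j → d j k = 0 := fun k hk => row_eq_zero_of_anticommute_single hd₁ hk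
  have hcol_i : ∀ k, k ≠ i → d k i = 0 := fun k hk => col_eq_zero_of_anticommute_single hd₁ hk
  have hsum := diag_add_eq_zero_of_anticommute_single hd₁
  have hrel : (d j j - d i i) * c = c - d j j := by
    have h := map_lie_map_lie_left hg (single i j 1) (single j i 1)
    rw [e₁, e₃, hc, Ring.lie_def, single_one_mul_eq_smul_single hrow_j,
      mul_single_one_eq_smul_single hcol_i, ← sub_smul, map_smul, hc] at h
    simpa using congr_fun₂ h i j
  -- `(2 * c + 1) ^ 2 = 1` because `c * c = -c`.
  have hjj : d j j = -c := by
    linear_combination (2 * c + 1) * (hrel + c * hsum) + (2 - 4 * d j j) * hc2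
  have hii : d i i = c := by linear_combination hsum - hjj
  constructor
  · rw [single_one_mul_eq_smul_single hrow_i, hii]
  · rw [single_one_mul_eq_smul_single hrow_j, hjj]

theorem add_mul_eq_zero_of_map_single (hg : Std.Associative (deformedMul g)) {i j k : ι}
    (hjk : j ≠ k) (hik : i ≠ k) {a b : R} (ha : g (single j k 1) = a • single j k 1)
    (hb : g (single i k 1) = b • single i k 1) (hb2 : b * b = -b) : a + a * b = 0 := by
  have e₁ : ⁅single j k (1 : R), single k k (1 : R)⁆ = single j k 1 := by
    simp [Ring.lie_def, hjk.symm]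
  have e₂ : ⁅single i j (1 : R), single j k (1 : R)⁆ = single i k 1 := by
    simp [Ring.lie_def, hik.symm]
  have e₃ : ⁅single i k (1 : R), single k k (1 : R)⁆ = single i k 1 := by
    simp [Ring.lie_def, hik.symm]
  have h := lie_identity_of_associative_deformedMul hg (single i j 1) (single j k 1) (single k k 1)
  simp only [e₁, e₂, e₃, single_mul_single_same, mul_one, ha, hb, lie_smul, smul_lie, map_smul,
    smul_smul, mul_smul_comm, smul_mul_assoc] at h
  have h' : a + b + a * b = b + b + b * b := by simpa using congr_fun₂ h i k
  linear_combination h' + hb2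

theorem exists_map_single_eq_smul_single (hg : Std.Associative (deformedMul g)) :
    ∃ l : R, l * l = -l ∧ ∀ i j : ι, i ≠ j → g (single i j 1) = l • single i j 1 := by
  set α : ι → ι → R := fun i j => g (single i j 1) i j
  have hα : ∀ i j, i ≠ j → g (single i j 1) = α i j • single i j 1 :=
    fun i j hij => map_single_eq_smul_single hg hij
  have hα2 : ∀ i j, i ≠ j → α i j * α i j = -α i j :=
    fun i j hij => mul_self_eq_neg_of_map_single hg hij (hα i j hij)
  have hsymm : ∀ i j, i ≠ j → α i j = α j i := fun i j hij => by
    have h₁ := (single_mul_map_single_sub_single hg hij (hα i j hij) (hα2 i j hij)).1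
    have h₂ := (single_mul_map_single_sub_single hg hij.symm (hα j i hij.symm)
      (hα2 j i hij.symm)).2
    rw [← neg_sub, map_neg, mul_neg, h₁, neg_smul, neg_inj] at h₂
    simpa using congr_fun₂ h₂ i i
  have hleft : ∀ i j k, i ≠ j → j ≠ k → i ≠ k → α i k = α j k := fun i j k hij hjk hik => by
    have h₁ := add_mul_eq_zero_of_map_single hg hjk hik (hα j k hjk) (hα i k hik) (hα2 i k hik)
    have h₂ := add_mul_eq_zero_of_map_single hg hik hjk (hα i k hik) (hα j k hjk) (hα2 j k hjk)
    linear_combination h₂ - h₁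
  by_cases h : ∃ i j : ι, i ≠ j
  · obtain ⟨i₀, j₀, h₀⟩ := h
    refine ⟨α i₀ j₀, hα2 i₀ j₀ h₀, fun i j hij => ?_⟩
    rw [hα i j hij, eq_of_ne_of_ne_of_symm_of_left hsymm hleft hij h₀]
  · exact ⟨0, by simp, fun i j hij => (h ⟨i, j, hij⟩).elim⟩

theorem map_single_sub_single_eq_smul {l : R} (hg : Std.Associative (deformedMul g))
    (hl : l * l = -l) (hoff : ∀ i j : ι, i ≠ j → g (single i j 1) = l • single i j 1) (i j : ι) :
    g (single i i 1 - single j j 1) = l • (single i i 1 - single j j 1) := by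
  have hrows : ∀ p q, p ≠ q → single p p 1 * g (single p p 1 - single q q 1) = l • single p p 1 ∧
      single q q 1 * g (single p p 1 - single q q 1) = -l • single q q 1 :=
    fun p q hpq => single_mul_map_single_sub_single hg hpq (hoff p q hpq) hl
  rcases eq_or_ne i j with rfl | hij
  · simp
  suffices h : ∀ p, single p p 1 * g (single i i 1 - single j j 1) =
      single p p 1 * l • (single i i 1 - single j j 1) by
    ext p q
    simpa using congr_fun₂ (h p) p q
  intro p
  rcases eq_or_ne p i with rfl | hpi
  · rw [(hrows p j hij).1]
    simp [mul_sub, hij]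
  rcases eq_or_ne p j with rfl | hpj
  · rw [(hrows i p hij).2]
    simp [mul_sub, hpi]
  have e : single i i (1 : R) - single j j 1 =
      (single i i 1 - single p p 1) + (single p p 1 - single j j 1) := by abel
  rw [e, map_add, mul_add, (hrows i p hpi.symm).2, (hrows p j hpj).1]
  simp [mul_sub, hpi, hpj]

theorem eq_smul_add_trace_smul {l : R} {z : Matrix ι ι R}
    (hoff : ∀ i j : ι, i ≠ j → g (single i j 1) = l • single i j 1)
    (hdiag : ∀ i, g (single i i 1) = l • single i i 1 + z) (x : Matrix ι ι R) :
    g x = l • x + x.trace • z := by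
  induction x using Matrix.induction_on' with
  | h_zero => simp
  | h_add x y hx hy => rw [map_add, hx, hy, trace_add, add_smul, smul_add]; abel
  | h_std_basis i j r =>
    have hr : single i j r = r • single i j 1 := by simp
    rw [hr, map_smul, trace_smul, smul_eq_mul]
    rcases eq_or_ne i j with rfl | hij
    · rw [hdiag, trace_single_eq_same, mul_one, smul_add, smul_comm r l]
    · rw [hoff i j hij, trace_single_eq_of_ne _ _ _ hij, mul_zero, zero_smul, add_zero, smul_comm]

end MatrixDeformation

end

theorem stmt_13_general {F : Type*} [Field F] {n : ℕ}
    (g : Matrix (Fin n) (Fin n) F →ₗ[F] Matrix (Fin n) (Fin n) F)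
    (star : Matrix (Fin n) (Fin n) F → Matrix (Fin n) (Fin n) F → Matrix (Fin n) (Fin n) F)
    (hstar : ∀ x y : Matrix (Fin n) (Fin n) F, star x y = x * y + g (x * y - y * x))
    (hA : ∀ x y z : Matrix (Fin n) (Fin n) F, star x (star y z) = star (star x y) z) :
    ∃ (l : F) (z : Matrix (Fin n) (Fin n) F),
      (l = 0 ∨ l = -1) ∧
      (∀ i j : Fin n, i ≠ j → g (Matrix.single i j (1 : F)) = l • Matrix.single i j (1 : F)) ∧
      (∀ i : Fin n, g (Matrix.single i i (1 : F)) = l • Matrix.single i i (1 : F) + z) ∧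
      (∀ x : Matrix (Fin n) (Fin n) F, g x = l • x + x.trace • z) := by
  have hg : Std.Associative (deformedMul g) :=
    ⟨fun x y z => by simp only [deformedMul, Ring.lie_def, ← hstar, hA]⟩
  obtain ⟨l, hl, hoff⟩ := exists_map_single_eq_smul_single hg
  obtain ⟨z, hdiag⟩ : ∃ z, ∀ i, g (single i i 1) = l • single i i 1 + z := by
    rcases isEmpty_or_nonempty (Fin n) with h | ⟨⟨i₀⟩⟩
    · exact ⟨0, isEmptyElim⟩
    refine ⟨g (single i₀ i₀ 1) - l • single i₀ i₀ 1, fun i => ?_⟩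
    have h := map_single_sub_single_eq_smul hg hl hoff i i₀
    rw [map_sub, smul_sub] at h
    rw [← sub_eq_iff_eq_add', sub_eq_sub_iff_sub_eq_sub, h]
  have hl' : l = 0 ∨ l = -1 := by
    rcases mul_eq_zero.1 (by linear_combination hl : l * (l + 1) = 0) with h | h
    exacts [Or.inl h, Or.inr (eq_neg_of_add_eq_zero_left h)]
  exact ⟨l, z, hl', hoff, hdiag, eq_smul_add_trace_smul hoff hdiag⟩

/-- For `n ≥ 2` there exist `λ ∈ {0, −1}` and a matrix `z` with
`g(e_{ij}) = λ • e_{ij}` for distinct `i, j`, `g(e_{ii}) = λ • e_{ii} + z` for all `i`,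
and consequently `g(x) = λ • x + tr(x) • z` for all `x`. -/
theorem stmt_13 {F : Type*} [Field F] (h2 : (2 : F) ≠ 0) {n : ℕ}
    (g : Matrix (Fin n) (Fin n) F →ₗ[F] Matrix (Fin n) (Fin n) F)
    (star : Matrix (Fin n) (Fin n) F → Matrix (Fin n) (Fin n) F → Matrix (Fin n) (Fin n) F)
    (hstar : ∀ x y : Matrix (Fin n) (Fin n) F, star x y = x * y + g (x * y - y * x))
    (hA : ∀ x y z : Matrix (Fin n) (Fin n) F, star x (star y z) = star (star x y) z)
    (hT : ∀ x y : Matrix (Fin n) (Fin n) F, (star x y).trace = (x * y).trace)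
    (hn : 2 ≤ n) :
    ∃ (l : F) (z : Matrix (Fin n) (Fin n) F),
      (l = 0 ∨ l = -1) ∧
      (∀ i j : Fin n, i ≠ j → g (Matrix.single i j (1 : F)) = l • Matrix.single i j (1 : F)) ∧
      (∀ i : Fin n, g (Matrix.single i i (1 : F)) = l • Matrix.single i i (1 : F) + z) ∧
      (∀ x : Matrix (Fin n) (Fin n) F, g x = l • x + x.trace • z) :=
  stmt_13_general g star hstar hA
end
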